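/- arXiv:2402.06302 — 4 statements merged into one kernel-verified Lean document; each statement's English description precedes it below -/
import Mathlib

section
/- If a real homogeneous polynomial h of degree d in n variables has a determinantal representation h = det(x_1 A_1 + ... + x_n A_n) with each A_k a positive semidefinite real d×d matrix, then h is stable, i.e., h(z_1,...,z_n) ≠ 0 whenever all z_j have strictly positive imaginary part, provided h is not identically zero. -/
/-!
If `h(z) = 0` with every `Im z_j > 0`, the complex pencil `∑ z_k A_k` has a kernel vector `v`.
Taking imaginary parts in `v* (∑ z_k A_k) v = 0` gives `∑ Im z_k · v* A_k v = 0`, a sum of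
nonnegative terms, so `v* A_k v = 0` and hence `A_k v = 0` for every `k`. Then `v` lies in the
kernel of the pencil at every point, so `h` vanishes identically.
-/

open MvPolynomial Matrix ComplexOrder

namespace Matrix

variable {n ι : Type*} [Fintype n] [Fintype ι]

theorem PosSemidef.map_algebraMap {𝕜 : Type*} [RCLike 𝕜] [DecidableEq n] {A : Matrix n n ℝ}
    (hA : A.PosSemidef) : (A.map (algebraMap ℝ 𝕜)).PosSemidef := by
  open scoped MatrixOrder in
  obtain ⟨B, rfl⟩ := CStarAlgebra.nonneg_iff_eq_star_mul_self.mp hA.nonneg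
  rw [star_eq_conjTranspose, Matrix.map_mul, conjTranspose_map _ fun a => by simp]
  exact posSemidef_conjTranspose_mul_self _

theorem PosSemidef.mulVec_eq_zero_of_sum_smul_mulVec_eq_zero {A : ι → Matrix n n ℂ}
    (hA : ∀ k, (A k).PosSemidef) {z : ι → ℂ} (hz : ∀ k, 0 < (z k).im) {v : n → ℂ}
    (hv : (∑ k, z k • A k) *ᵥ v = 0) (k : ι) : A k *ᵥ v = 0 := by
  set c : ι → ℂ := fun k => star v ⬝ᵥ A k *ᵥ v
  have hc : ∀ k, 0 ≤ (c k).re ∧ (c k).im = 0 := fun k =>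
    have := Complex.le_def.mp ((hA k).dotProduct_mulVec_nonneg v)
    ⟨this.1, this.2.symm⟩
  have hsum : ∑ k, (z k).im * (c k).re = 0 := by
    have := congrArg (fun w => (star v ⬝ᵥ w).im) hv
    simpa [c, sum_mulVec, dotProduct_sum, smul_mulVec, Complex.im_sum, Complex.mul_im,
      (hc _).2] using this
  have hterm := (Finset.sum_eq_zero_iff_of_nonneg fun k _ => mul_nonneg (hz k).le (hc k).1).mp
    hsum k (Finset.mem_univ k)
  have hck : c k = 0 := Complex.ext ((mul_eq_zero.mp hterm).resolve_left (hz k).ne') (hc k).2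
  exact ((hA k).dotProduct_mulVec_zero_iff v).mp hck

theorem det_sum_smul_eq_zero_of_mulVec_eq_zero {R : Type*} [CommRing R] [IsDomain R]
    [DecidableEq n] {A : ι → Matrix n n R} {v : n → R} (hv0 : v ≠ 0) (hv : ∀ k, A k *ᵥ v = 0)
    (w : ι → R) : (∑ k, w k • A k).det = 0 :=
  exists_mulVec_eq_zero_iff.mp ⟨v, hv0, by simp [sum_mulVec, smul_mulVec, hv]⟩

end Matrix

namespace MvPolynomial

variable {σ n K : Type*} [Fintype σ] [Fintype n] [DecidableEq n]
  [CommRing K] [IsDomain K] [Infinite K]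

theorem eq_det_of_eval_eq_det {h : MvPolynomial σ K} {A : σ → Matrix n n K}
    (hdet : ∀ x : σ → K, eval x h = (∑ k, x k • A k).det) :
    h = (∑ k, (X k : MvPolynomial σ K) • (A k).map C).det :=
  funext fun x => by
    rw [hdet x, RingHom.map_det]
    congr 1
    ext i j
    simp [Matrix.sum_apply]

theorem eval_map_eq_det_of_eval_eq_det {S : Type*} [CommRing S] [Algebra K S]
    {h : MvPolynomial σ K} {A : σ → Matrix n n K}
    (hdet : ∀ x : σ → K, eval x h = (∑ k, x k • A k).det) (w : σ → S) :
    eval w (map (algebraMap K S) h) = (∑ k, w k • (A k).map (algebraMap K S)).det := by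
  change ((eval w).comp (map (algebraMap K S))) h = _
  rw [eq_det_of_eval_eq_det hdet, RingHom.map_det]
  congr 1
  ext i j
  simp [Matrix.sum_apply]

end MvPolynomial

theorem determinantal_stable_general {n d : ℕ} (h : MvPolynomial (Fin n) ℝ)
    (A : Fin n → Matrix (Fin d) (Fin d) ℝ)
    (hA : ∀ k, (A k).PosSemidef)
    (hdet : ∀ x : Fin n → ℝ, eval x h = (∑ k, x k • A k).det)
    (hne : h ≠ 0) :
    ∀ z : Fin n → ℂ, (∀ j, 0 < (z j).im) →
      eval z (map (algebraMap ℝ ℂ) h) ≠ 0 := by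
  intro z hz hzero
  have hpencil := eval_map_eq_det_of_eval_eq_det (S := ℂ) hdet
  obtain ⟨v, hv0, hv⟩ := exists_mulVec_eq_zero_iff.mpr ((hpencil z).symm.trans hzero)
  have hker := PosSemidef.mulVec_eq_zero_of_sum_smul_mulVec_eq_zero
    (fun k => (hA k).map_algebraMap) hz hv
  refine hne (map_injective _ (algebraMap ℝ ℂ).injective (funext fun w => ?_))
  rw [hpencil, map_zero, map_zero, det_sum_smul_eq_zero_of_mulVec_eq_zero hv0 hker]

/-- If a nonzero real homogeneous polynomial `h` of degree `d` has a determinantal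
representation `h = det(x_1 A_1 + ⋯ + x_n A_n)` with each `A_k` positive semidefinite,
then `h` is stable: it does not vanish when all variables lie in the open upper half-plane. -/
theorem determinantal_stable {n d : ℕ} (h : MvPolynomial (Fin n) ℝ)
    (hhom : h.IsHomogeneous d)
    (A : Fin n → Matrix (Fin d) (Fin d) ℝ)
    (hA : ∀ k, (A k).PosSemidef)
    (hdet : ∀ x : Fin n → ℝ, eval x h = (∑ k, x k • A k).det)
    (hne : h ≠ 0) :
    ∀ z : Fin n → ℂ, (∀ j, 0 < (z j).im) →
      eval z (map (algebraMap ℝ ℂ) h) ≠ 0 :=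
  determinantal_stable_general h A hA hdet hne
end

section
/- For the uniform matroid U_{k,n} with 0 < k < n, the basis-generating polynomial e_k(x_1,...,x_n) (the elementary symmetric polynomial of degree k) satisfies the Rayleigh condition: for all i ≠ j and all x with positive coordinates, (∂e_k/∂x_i)(∂e_k/∂x_j) ≥ (∂²e_k/∂x_i∂x_j)·e_k at x. -/
open MvPolynomial

section aux

variable {α : Type*} [DecidableEq α]

/-- Elementary symmetric function of the values `x i`, `i ∈ A`, of degree `m`. -/
noncomputable def esum (x : α → ℝ) (A : Finset α) (m : ℕ) : ℝ :=
  ∑ t ∈ A.powersetCard m, ∏ i ∈ t, x i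

lemma esum_zero (x : α → ℝ) (A : Finset α) : esum x A 0 = 1 := by
  simp [esum, Finset.powersetCard_zero]

lemma esum_empty (x : α → ℝ) (m : ℕ) : esum x (∅ : Finset α) (m + 1) = 0 := by
  rw [esum, Finset.powersetCard_eq_empty.2 (by simp), Finset.sum_empty]

lemma esum_insert (x : α → ℝ) {a : α} {A : Finset α} (ha : a ∉ A) (m : ℕ) :
    esum x (insert a A) (m + 1) = esum x A (m + 1) + x a * esum x A m := by
  unfold esum
  rw [Finset.powersetCard_succ_insert ha, Finset.sum_union, Finset.sum_image]
  · rw [Finset.mul_sum]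
    congr 1
    refine Finset.sum_congr rfl fun t ht => ?_
    have hat : a ∉ t := fun h => ha ((Finset.mem_powersetCard.1 ht).1 h)
    rw [Finset.prod_insert hat]
  · intro s hs t ht hst
    have has : a ∉ s := fun h => ha ((Finset.mem_powersetCard.1 hs).1 h)
    have hat : a ∉ t := fun h => ha ((Finset.mem_powersetCard.1 ht).1 h)
    rw [← Finset.erase_insert has, ← Finset.erase_insert hat, hst]
  · rw [Finset.disjoint_left]
    intro t ht ht'
    obtain ⟨s, hs, rfl⟩ := Finset.mem_image.1 ht'
    exact (fun h => ha ((Finset.mem_powersetCard.1 ht).1 h)) (Finset.mem_insert_self a s)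

lemma esum_nonneg {x : α → ℝ} {A : Finset α} (hx : ∀ i ∈ A, 0 ≤ x i) (m : ℕ) :
    0 ≤ esum x A m :=
  Finset.sum_nonneg fun t ht =>
    Finset.prod_nonneg fun i hi => hx i ((Finset.mem_powersetCard.1 ht).1 hi)

/-- Newton-type log-concavity for elementary symmetric functions of nonnegative reals. -/
lemma esum_logConcave {x : α → ℝ} {A : Finset α} (hx : ∀ i ∈ A, 0 ≤ x i) :
    ∀ r s : ℕ, r ≤ s →
      esum x A r * esum x A (s + 2) ≤ esum x A (r + 1) * esum x A (s + 1) := by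
  induction A using Finset.induction_on with
  | empty =>
    intro r s _
    have h1 : esum x (∅ : Finset α) (s + 2) = 0 := esum_empty x (s + 1)
    have h2 : esum x (∅ : Finset α) (r + 1) = 0 := esum_empty x r
    rw [h1, h2, mul_zero, zero_mul]
  | @insert a A ha ih =>
    have hxa : 0 ≤ x a := hx a (Finset.mem_insert_self a A)
    have hx' : ∀ i ∈ A, 0 ≤ x i := fun i hi => hx i (Finset.mem_insert_of_mem hi)
    have IH := ih hx'
    have N : ∀ m, 0 ≤ esum x A m := esum_nonneg hx'
    intro r s hrs
    cases r with
    | zero =>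
      show esum x (insert a A) 0 * esum x (insert a A) ((s + 1) + 1) ≤
        esum x (insert a A) (0 + 1) * esum x (insert a A) (s + 1)
      cases s with
      | zero =>
        rw [esum_insert x ha 1, esum_insert x ha 0, esum_zero, esum_zero]
        have h1 := IH 0 0 le_rfl
        rw [esum_zero] at h1
        nlinarith [N 0, N 1, N 2, mul_nonneg hxa (N 1), mul_nonneg (mul_nonneg hxa hxa) (N 0)]
      | succ s =>
        rw [esum_insert x ha (s + 2), esum_insert x ha 0, esum_insert x ha (s + 1), esum_zero]
        have h1 := IH 0 (s + 1) (by omega)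
        rw [esum_zero] at h1
        have e3 : esum x A (s + 2 + 1) = esum x A (s + 1 + 2) := by norm_num
        have e4 : esum x A (s + 2) = esum x A (s + 1 + 1) := by norm_num
        rw [e3, e4, esum_zero]
        nlinarith [N (s + 1), N (s + 1 + 1), mul_nonneg hxa (mul_nonneg (N (0 + 1)) (N (s + 1))),
          mul_nonneg (mul_nonneg hxa hxa) (N (s + 1))]
    | succ r =>
      obtain ⟨s, rfl⟩ : ∃ s', s = s' + 1 := ⟨s - 1, by omega⟩
      have hrs' : r ≤ s := by omega
      show esum x (insert a A) (r + 1) * esum x (insert a A) (((s + 2) + 1)) ≤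
        esum x (insert a A) ((r + 1) + 1) * esum x (insert a A) ((s + 1) + 1)
      rw [esum_insert x ha r, esum_insert x ha (s + 2), esum_insert x ha (r + 1),
        esum_insert x ha (s + 1)]
      have e3 : esum x A (s + 2 + 1) = esum x A (s + 3) := by norm_num
      rw [e3]
      have h1 := IH (r + 1) (s + 1) (by omega)
      have h2 := IH r s hrs'
      have hmid : esum x A r * esum x A (s + 3) ≤ esum x A (r + 2) * esum x A (s + 1) := by
        rcases eq_or_lt_of_le hrs' with h | h
        · subst h
          have := IH r (r + 1) (by omega)
          nlinarith [this]
        · calc esum x A r * esum x A (s + 3) ≤ esum x A (r + 1) * esum x A (s + 2) :=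
                IH r (s + 1) (by omega)
            _ ≤ esum x A (r + 2) * esum x A (s + 1) := IH (r + 1) s (by omega)
      nlinarith [h1, mul_le_mul_of_nonneg_left hmid hxa,
        mul_le_mul_of_nonneg_left h2 (mul_nonneg hxa hxa)]

lemma pderiv_prod_X (j : α) (t : Finset α) :
    pderiv j (∏ i ∈ t, X i : MvPolynomial α ℝ) =
      if j ∈ t then ∏ i ∈ t.erase j, X i else 0 := by
  induction t using Finset.induction_on with
  | empty => simp
  | @insert a t ha ih =>
    rw [Finset.prod_insert ha, pderiv_mul, ih]
    by_cases h : j = a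
    · subst h
      have hjt : j ∉ t := ha
      simp [hjt, Finset.erase_insert ha]
    · by_cases h2 : j ∈ t
      · have hmem : j ∈ insert a t := Finset.mem_insert_of_mem h2
        have hne : a ≠ j := fun hh => h hh.symm
        rw [if_pos h2, if_pos hmem, pderiv_X_of_ne hne, Finset.erase_insert_of_ne hne,
          Finset.prod_insert (fun hh => ha (Finset.mem_of_mem_erase hh))]
        ring
      · have : j ∉ insert a t := by simp [h, h2]
        simp [h2, this, pderiv_X_of_ne (fun hh : a = j => h hh.symm)]

lemma pderiv_sum_prod_X (A : Finset α) (k : ℕ) {j : α} (hj : j ∈ A) :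
    pderiv j (∑ t ∈ A.powersetCard (k + 1), ∏ i ∈ t, X i : MvPolynomial α ℝ) =
      ∑ t ∈ (A.erase j).powersetCard k, ∏ i ∈ t, X i := by
  rw [map_sum]
  simp only [pderiv_prod_X]
  have hA : A = insert j (A.erase j) := (Finset.insert_erase hj).symm
  rw [show A.powersetCard (k + 1) = (insert j (A.erase j)).powersetCard (k + 1) by rw [← hA]]
  rw [Finset.powersetCard_succ_insert (Finset.notMem_erase j A), Finset.sum_union, Finset.sum_image]
  · have h0 : ∑ t ∈ (A.erase j).powersetCard (k + 1),
        (if j ∈ t then ∏ i ∈ t.erase j, (X i : MvPolynomial α ℝ) else 0) = 0 := by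
      refine Finset.sum_eq_zero fun t ht => ?_
      have : j ∉ t := fun h => Finset.notMem_erase j A ((Finset.mem_powersetCard.1 ht).1 h)
      simp [this]
    rw [h0, zero_add]
    refine Finset.sum_congr rfl fun t ht => ?_
    have hjt : j ∉ t := fun h => Finset.notMem_erase j A ((Finset.mem_powersetCard.1 ht).1 h)
    simp [Finset.erase_insert hjt]
  · intro s hs t ht hst
    have has : j ∉ s := fun h => Finset.notMem_erase j A ((Finset.mem_powersetCard.1 hs).1 h)
    have hat : j ∉ t := fun h => Finset.notMem_erase j A ((Finset.mem_powersetCard.1 ht).1 h)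
    rw [← Finset.erase_insert has, ← Finset.erase_insert hat, hst]
  · rw [Finset.disjoint_left]
    intro t ht ht'
    obtain ⟨s, hs, rfl⟩ := Finset.mem_image.1 ht'
    exact (fun h => Finset.notMem_erase j A ((Finset.mem_powersetCard.1 ht).1 h))
      (Finset.mem_insert_self j s)

lemma eval_sum_prod_X [Fintype α] (x : α → ℝ) (A : Finset α) (m : ℕ) :
    eval x (∑ t ∈ A.powersetCard m, ∏ i ∈ t, X i : MvPolynomial α ℝ) = esum x A m := by
  simp [esum, eval_prod]

end aux

/-- The basis-generating polynomial of the uniform matroid `U_{k,n}`, namely the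
elementary symmetric polynomial `e_k`, satisfies the Rayleigh condition on the
positive orthant. -/
theorem esymm_rayleigh {n k : ℕ} (hk : 0 < k) (hkn : k < n) :
    ∀ x : Fin n → ℝ, (∀ i, 0 < x i) → ∀ i j : Fin n, i ≠ j →
      eval x (pderiv i (esymm (Fin n) ℝ k)) * eval x (pderiv j (esymm (Fin n) ℝ k)) ≥
        eval x (pderiv i (pderiv j (esymm (Fin n) ℝ k))) * eval x (esymm (Fin n) ℝ k) := by
  intro x hx i j hij
  obtain ⟨m, rfl⟩ : ∃ m, k = m + 1 := ⟨k - 1, by omega⟩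
  have he : esymm (Fin n) ℝ (m + 1) =
      ∑ t ∈ Finset.univ.powersetCard (m + 1), ∏ i ∈ t, X i := rfl
  have hdi : pderiv i (esymm (Fin n) ℝ (m + 1)) =
      ∑ t ∈ (Finset.univ.erase i).powersetCard m, ∏ l ∈ t, X l := by
    rw [he]; exact pderiv_sum_prod_X Finset.univ m (Finset.mem_univ i)
  have hdj : pderiv j (esymm (Fin n) ℝ (m + 1)) =
      ∑ t ∈ (Finset.univ.erase j).powersetCard m, ∏ l ∈ t, X l := by
    rw [he]; exact pderiv_sum_prod_X Finset.univ m (Finset.mem_univ j)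
  cases m with
  | zero =>
    have hdj1 : pderiv j (esymm (Fin n) ℝ 1) = 1 := by
      rw [hdj, Finset.powersetCard_zero, Finset.sum_singleton, Finset.prod_empty]
    have hdi1 : pderiv i (esymm (Fin n) ℝ 1) = 1 := by
      rw [hdi, Finset.powersetCard_zero, Finset.sum_singleton, Finset.prod_empty]
    rw [hdj1, hdi1]
    simp
  | succ m =>
    set A : Finset (Fin n) := (Finset.univ.erase j).erase i with hA
    have hiA : i ∉ A := Finset.notMem_erase i _
    have hjA : j ∉ A := fun h => Finset.notMem_erase j _ (Finset.mem_of_mem_erase h)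
    have hAi : (Finset.univ.erase i).erase j = A := Finset.erase_right_comm
    have hij' : i ∈ Finset.univ.erase j := Finset.mem_erase.2 ⟨hij, Finset.mem_univ i⟩
    have hji' : j ∈ Finset.univ.erase i := Finset.mem_erase.2 ⟨Ne.symm hij, Finset.mem_univ j⟩
    have hdij : pderiv i (pderiv j (esymm (Fin n) ℝ (m + 1 + 1))) =
        ∑ t ∈ A.powersetCard m, ∏ l ∈ t, X l := by
      rw [hdj]
      exact pderiv_sum_prod_X (Finset.univ.erase j) m hij'
    -- pass to evaluations
    rw [hdij, hdi, hdj, he, eval_sum_prod_X, eval_sum_prod_X, eval_sum_prod_X, eval_sum_prod_X]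
    have hx' : ∀ l ∈ A, 0 ≤ x l := fun l _ => (hx l).le
    -- decompositions
    have d1 : esum x (Finset.univ.erase i) (m + 1) =
        esum x A (m + 1) + x j * esum x A m := by
      rw [show Finset.univ.erase i = insert j A by rw [← hAi, Finset.insert_erase hji']]
      exact esum_insert x hjA m
    have d2 : esum x (Finset.univ.erase j) (m + 1) =
        esum x A (m + 1) + x i * esum x A m := by
      rw [show Finset.univ.erase j = insert i A from (Finset.insert_erase hij').symm]
      exact esum_insert x hiA m
    have d3 : esum x (Finset.univ : Finset (Fin n)) (m + 2) =
        esum x A (m + 2) + x j * esum x A (m + 1) +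
          x i * (esum x A (m + 1) + x j * esum x A m) := by
      have e1 : (Finset.univ : Finset (Fin n)) = insert i (Finset.univ.erase i) :=
        (Finset.insert_erase (Finset.mem_univ i)).symm
      rw [e1, esum_insert x (Finset.notMem_erase i _) (m + 1), d1]
      congr 1
      rw [show Finset.univ.erase i = insert j A by rw [← hAi, Finset.insert_erase hji']]
      exact esum_insert x hjA (m + 1)
    rw [d1, d2]
    rw [show (m + 1 + 1 : ℕ) = m + 2 from rfl, d3]
    have key := esum_logConcave hx' m m le_rfl
    have h0 : 0 ≤ esum x A m := esum_nonneg hx' m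
    nlinarith [key, h0, mul_nonneg (hx i).le (hx j).le]
end

section
/- The elementary symmetric polynomial e_k(z_1,...,z_n) is stable: it has no zeros with all coordinates in the open upper half-plane. -/
open MvPolynomial Polynomial

lemma logderiv_aux (M : Multiset ℂ) (w : ℂ) (hw : 0 ≤ w.im) (hM : ∀ r ∈ M, r.im < 0) :
    Polynomial.eval w (M.map (fun r => Polynomial.X - Polynomial.C r)).prod ≠ 0 ∧
    ((Polynomial.eval w (Polynomial.derivative (M.map (fun r => Polynomial.X - Polynomial.C r)).prod))
      / Polynomial.eval w (M.map (fun r => Polynomial.X - Polynomial.C r)).prod).im ≤ 0 ∧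
    (M ≠ 0 →
      ((Polynomial.eval w (Polynomial.derivative (M.map (fun r => Polynomial.X - Polynomial.C r)).prod))
        / Polynomial.eval w (M.map (fun r => Polynomial.X - Polynomial.C r)).prod).im < 0) := by
  induction M using Multiset.induction_on with
  | empty => simp
  | cons r M ih =>
    have hr : r.im < 0 := hM r (Multiset.mem_cons_self r M)
    have hM' : ∀ s ∈ M, s.im < 0 := fun s hs => hM s (Multiset.mem_cons_of_mem hs)
    obtain ⟨h1, h2, _⟩ := ih hM'
    have hwr : (w - r) ≠ 0 := by
      intro h
      have : (w - r).im = 0 := by rw [h]; simp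
      simp only [Complex.sub_im] at this
      linarith
    have hwrim : 0 < (w - r).im := by simp only [Complex.sub_im]; linarith
    have hinv : ((w - r)⁻¹).im < 0 := by
      rw [Complex.inv_im]
      have : 0 < Complex.normSq (w - r) := by
        rw [Complex.normSq_pos]; exact hwr
      exact div_neg_of_neg_of_pos (by linarith) this
    set p := (M.map (fun r => Polynomial.X - Polynomial.C r)).prod with hp
    have hprod : ((r ::ₘ M).map (fun r => Polynomial.X - Polynomial.C r)).prod
        = (Polynomial.X - Polynomial.C r) * p := by
      rw [Multiset.map_cons, Multiset.prod_cons]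
    have hderiv : Polynomial.derivative ((Polynomial.X - Polynomial.C r) * p)
        = p + (Polynomial.X - Polynomial.C r) * Polynomial.derivative p := by
      rw [Polynomial.derivative_mul]
      simp
    have heval : Polynomial.eval w ((Polynomial.X - Polynomial.C r) * p) = (w - r) * Polynomial.eval w p := by
      simp
    have hne : Polynomial.eval w ((Polynomial.X - Polynomial.C r) * p) ≠ 0 := by
      rw [heval]; exact mul_ne_zero hwr h1
    have key : Polynomial.eval w (Polynomial.derivative ((Polynomial.X - Polynomial.C r) * p))
        / Polynomial.eval w ((Polynomial.X - Polynomial.C r) * p)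
        = (w - r)⁻¹ + Polynomial.eval w (Polynomial.derivative p) / Polynomial.eval w p := by
      rw [hderiv, heval]
      simp only [Polynomial.eval_add, Polynomial.eval_mul, Polynomial.eval_sub,
        Polynomial.eval_X, Polynomial.eval_C]
      field_simp
    refine ⟨by rw [hprod]; exact hne, ?_, fun _ => ?_⟩ <;>
    · rw [hprod, key, Complex.add_im]
      linarith

lemma gauss_lucas_step (p : Polynomial ℂ) (h : ∀ r ∈ p.roots, r.im < 0) :
    ∀ r ∈ (Polynomial.derivative p).roots, r.im < 0 := by
  by_cases hp : p = 0
  · simp [hp]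
  by_cases hdp : Polynomial.derivative p = 0
  · simp [hdp]
  intro w hw
  by_contra hwim
  push_neg at hwim
  have hcard : p.roots.card = p.natDegree :=
    (Polynomial.splits_iff_card_roots).mp (IsAlgClosed.splits p)
  have hfact := Polynomial.C_leadingCoeff_mul_prod_multiset_X_sub_C hcard
  have hMne : p.roots ≠ 0 := by
    intro h0
    apply hdp
    rw [← hfact, h0]
    simp
  obtain ⟨h1, _, h3⟩ := logderiv_aux p.roots w hwim h
  have hwroot : Polynomial.eval w (Polynomial.derivative p) = 0 :=
    Polynomial.isRoot_of_mem_roots hw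
  have hd : Polynomial.derivative p = Polynomial.C p.leadingCoeff *
      Polynomial.derivative (p.roots.map (fun r => Polynomial.X - Polynomial.C r)).prod := by
    conv_lhs => rw [← hfact]
    rw [Polynomial.derivative_mul, Polynomial.derivative_C, zero_mul, zero_add]
  have hlc : p.leadingCoeff ≠ 0 := Polynomial.leadingCoeff_ne_zero.mpr hp
  have : Polynomial.eval w (Polynomial.derivative (p.roots.map (fun r => Polynomial.X - Polynomial.C r)).prod) = 0 := by
    rw [hd] at hwroot
    simpa [hlc] using hwroot
  have h4 := h3 hMne
  rw [this, zero_div] at h4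
  simp at h4

/-- The elementary symmetric polynomial `e_k(z_1,…,z_n)` is stable: it has no zeros with
all coordinates in the open upper half-plane. -/
theorem esymm_stable {n k : ℕ} (hkn : k ≤ n) :
    ∀ z : Fin n → ℂ, (∀ j, 0 < (z j).im) → eval z (esymm (Fin n) ℂ k) ≠ 0 := by
  intro z hz he
  set q : Polynomial ℂ := ∏ j : Fin n, (Polynomial.X + Polynomial.C (z j)) with hq
  have hcard : (Finset.univ : Finset (Fin n)).card = n := by simp
  -- coeff of q
  have hcoeff : q.coeff (n - k) = eval z (esymm (Fin n) ℂ k) := by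
    rw [hq, Finset.prod_X_add_C_coeff _ _ (by omega : n - k ≤ Finset.univ.card)]
    rw [esymm, MvPolynomial.eval_sum]
    rw [hcard, Nat.sub_sub_self hkn]
    refine Finset.sum_congr rfl fun t ht => ?_
    rw [MvPolynomial.eval_prod]
    simp
  -- q monic of degree n
  have hqmonic : q.Monic := Polynomial.monic_prod_of_monic _ _ fun j _ => Polynomial.monic_X_add_C _
  have hqdeg : q.natDegree = n := by
    rw [hq, Polynomial.natDegree_prod _ _ (fun j _ => (Polynomial.monic_X_add_C (z j)).ne_zero)]
    simp [Polynomial.natDegree_X_add_C]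
  -- roots of q
  have hqroots : ∀ r ∈ q.roots, r.im < 0 := by
    intro r hr
    have := Polynomial.isRoot_of_mem_roots hr
    rw [hq, Polynomial.IsRoot, Polynomial.eval_prod] at this
    obtain ⟨j, _, hj⟩ := Finset.prod_eq_zero_iff.mp this
    simp only [Polynomial.eval_add, Polynomial.eval_X, Polynomial.eval_C] at hj
    have : r = -z j := by linear_combination hj
    rw [this]
    simpa using hz j
  -- iterated derivative
  set P : Polynomial ℂ := (⇑Polynomial.derivative)^[n - k] q with hP
  have hProots : ∀ r ∈ P.roots, r.im < 0 := by
    rw [hP]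
    clear_value q
    clear hcoeff hq hP
    induction (n - k) with
    | zero => simpa using hqroots
    | succ m ih =>
      rw [Function.iterate_succ_apply']
      exact gauss_lucas_step _ ih
  have hPne : P ≠ 0 := by
    intro h0
    have hc := Polynomial.coeff_iterate_derivative q k (k := n - k)
    rw [← hP, h0, Polynomial.coeff_zero] at hc
    have hcn : q.coeff (k + (n - k)) = 1 := by
      rw [(by omega : k + (n - k) = n), ← hqdeg]
      exact hqmonic.coeff_natDegree
    rw [hcn, nsmul_eq_mul, mul_one] at hc
    have hdne : (k + (n - k)).descFactorial (n - k) ≠ 0 := by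
      intro h
      have := Nat.descFactorial_eq_zero_iff_lt.mp h
      omega
    exact Nat.cast_ne_zero.mpr hdne hc.symm
  have hPeval : Polynomial.eval 0 P = ((n - k).factorial : ℂ) * eval z (esymm (Fin n) ℂ k) := by
    rw [← Polynomial.coeff_zero_eq_eval_zero, hP, Polynomial.coeff_iterate_derivative,
      zero_add, hcoeff, Nat.descFactorial_self, nsmul_eq_mul]
  have : Polynomial.eval 0 P = 0 := by rw [hPeval, he, mul_zero]
  have h0root : (0 : ℂ) ∈ P.roots := (Polynomial.mem_roots hPne).mpr this
  have := hProots 0 h0root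
  simp at this
end

section
/- The Rayleigh difference operator applied to a product satisfies: for multi-affine polynomials f (in variables indexed by S) and g (in variables indexed by T, disjoint from S), and indices i,j ∈ S, one has Δ_{ij}(f·g) = g² · Δ_{ij}(f); and for i ∈ S, j ∈ T, Δ_{ij}(f·g) = 0... so if f and g are both Rayleigh then f·g is Rayleigh. -/
open MvPolynomial

lemma pd_inl_inr {S T : Type*} (g : MvPolynomial T ℝ) (i : S) :
    pderiv (Sum.inl i) (rename (Sum.inr : T → S ⊕ T) g) = 0 := by
  apply pderiv_eq_zero_of_notMem_vars
  intro h
  obtain ⟨j, _, hj⟩ := mem_vars_rename _ _ h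
  exact Sum.inl_ne_inr hj.symm

lemma pd_inr_inl {S T : Type*} (f : MvPolynomial S ℝ) (j : T) :
    pderiv (Sum.inr j) (rename (Sum.inl : S → S ⊕ T) f) = 0 := by
  apply pderiv_eq_zero_of_notMem_vars
  intro h
  obtain ⟨i, _, hi⟩ := mem_vars_rename _ _ h
  exact Sum.inl_ne_inr hi

lemma partSS {S T : Type*} (f : MvPolynomial S ℝ) (g : MvPolynomial T ℝ) (i j : S) :
      pderiv (Sum.inl i) (rename Sum.inl f * rename Sum.inr g) *
          pderiv (Sum.inl j) (rename Sum.inl f * rename Sum.inr g) -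
        pderiv (Sum.inl i) (pderiv (Sum.inl j) (rename Sum.inl f * rename Sum.inr g)) *
          (rename Sum.inl f * rename Sum.inr g) =
      (rename Sum.inr g) ^ 2 *
        rename Sum.inl (pderiv i f * pderiv j f - pderiv i (pderiv j f) * f) := by
  simp only [pderiv_mul, pd_inl_inr, pderiv_rename (Sum.inl_injective (α := S) (β := T)),
    map_sub, map_mul, mul_zero, add_zero, zero_mul]
  ring

lemma partTT {S T : Type*} (f : MvPolynomial S ℝ) (g : MvPolynomial T ℝ) (i j : T) :
      pderiv (Sum.inr i) (rename Sum.inl f * rename Sum.inr g) *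
          pderiv (Sum.inr j) (rename Sum.inl f * rename Sum.inr g) -
        pderiv (Sum.inr i) (pderiv (Sum.inr j) (rename Sum.inl f * rename Sum.inr g)) *
          (rename Sum.inl f * rename Sum.inr g) =
      (rename Sum.inl f) ^ 2 *
        rename Sum.inr (pderiv i g * pderiv j g - pderiv i (pderiv j g) * g) := by
  simp only [pderiv_mul, pd_inr_inl, pderiv_rename (Sum.inr_injective (α := S) (β := T)),
    map_sub, map_mul, mul_zero, add_zero, zero_mul, zero_add, zero_mul]
  ring

lemma partST {S T : Type*} (f : MvPolynomial S ℝ) (g : MvPolynomial T ℝ) (i : S) (j : T) :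
      pderiv (Sum.inl i) (rename Sum.inl f * rename Sum.inr g) *
          pderiv (Sum.inr j) (rename Sum.inl f * rename Sum.inr g) -
        pderiv (Sum.inl i) (pderiv (Sum.inr j) (rename Sum.inl f * rename Sum.inr g)) *
          (rename Sum.inl f * rename Sum.inr g) = 0 := by
  simp only [pderiv_mul, pd_inr_inl, pd_inl_inr,
    pderiv_rename (Sum.inl_injective (α := S) (β := T)),
    pderiv_rename (Sum.inr_injective (α := S) (β := T)),
    mul_zero, add_zero, zero_mul, zero_add]
  ring

lemma partTS {S T : Type*} (f : MvPolynomial S ℝ) (g : MvPolynomial T ℝ) (i : T) (j : S) :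
      pderiv (Sum.inr i) (rename Sum.inl f * rename Sum.inr g) *
          pderiv (Sum.inl j) (rename Sum.inl f * rename Sum.inr g) -
        pderiv (Sum.inr i) (pderiv (Sum.inl j) (rename Sum.inl f * rename Sum.inr g)) *
          (rename Sum.inl f * rename Sum.inr g) = 0 := by
  simp only [pderiv_mul, pd_inr_inl, pd_inl_inr,
    pderiv_rename (Sum.inl_injective (α := S) (β := T)),
    pderiv_rename (Sum.inr_injective (α := S) (β := T)),
    mul_zero, add_zero, zero_mul, zero_add]
  ring

/-- For multi-affine polynomials `f` (in variables `S`) and `g` (in variables `T`), writing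
`F = f · g` as a polynomial in the disjoint union `S ⊕ T` of the variables:
`Δ_{ij}(F) = g² · Δ_{ij}(f)` for `i, j ∈ S`; `Δ_{ij}(F) = 0` for `i ∈ S`, `j ∈ T`; and
consequently if `f` and `g` are both Rayleigh then so is `F`. -/
theorem rayleigh_diff_mul_disjoint {S T : Type*}
    (f : MvPolynomial S ℝ) (g : MvPolynomial T ℝ)
    (hmaf : ∀ i, f.degreeOf i ≤ 1) (hmag : ∀ j, g.degreeOf j ≤ 1)
    (hcf : ∀ m, 0 ≤ f.coeff m) (hcg : ∀ m, 0 ≤ g.coeff m) :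
    (∀ i j : S,
      pderiv (Sum.inl i) (rename Sum.inl f * rename Sum.inr g) *
          pderiv (Sum.inl j) (rename Sum.inl f * rename Sum.inr g) -
        pderiv (Sum.inl i) (pderiv (Sum.inl j) (rename Sum.inl f * rename Sum.inr g)) *
          (rename Sum.inl f * rename Sum.inr g) =
      (rename Sum.inr g) ^ 2 *
        rename Sum.inl (pderiv i f * pderiv j f - pderiv i (pderiv j f) * f)) ∧
    (∀ (i : S) (j : T),
      pderiv (Sum.inl i) (rename Sum.inl f * rename Sum.inr g) *
          pderiv (Sum.inr j) (rename Sum.inl f * rename Sum.inr g) -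
        pderiv (Sum.inl i) (pderiv (Sum.inr j) (rename Sum.inl f * rename Sum.inr g)) *
          (rename Sum.inl f * rename Sum.inr g) = 0) ∧
    ((∀ x : S → ℝ, (∀ i, 0 < x i) → ∀ i j : S,
        eval x (pderiv i f) * eval x (pderiv j f) ≥ eval x (pderiv i (pderiv j f)) * eval x f) →
     (∀ y : T → ℝ, (∀ j, 0 < y j) → ∀ i j : T,
        eval y (pderiv i g) * eval y (pderiv j g) ≥ eval y (pderiv i (pderiv j g)) * eval y g) →
     ∀ z : S ⊕ T → ℝ, (∀ i, 0 < z i) → ∀ i j : S ⊕ T,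
        eval z (pderiv i (rename Sum.inl f * rename Sum.inr g)) *
            eval z (pderiv j (rename Sum.inl f * rename Sum.inr g)) ≥
          eval z (pderiv i (pderiv j (rename Sum.inl f * rename Sum.inr g))) *
            eval z (rename Sum.inl f * rename Sum.inr g)) := by
  refine ⟨partSS f g, partST f g, ?_⟩
  intro hRf hRg z hz i j
  rw [ge_iff_le, ← sub_nonneg]
  have key : ∀ p : MvPolynomial (S ⊕ T) ℝ,
      (pderiv i (rename Sum.inl f * rename Sum.inr g) *
          pderiv j (rename Sum.inl f * rename Sum.inr g) -
        pderiv i (pderiv j (rename Sum.inl f * rename Sum.inr g)) *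
          (rename Sum.inl f * rename Sum.inr g)) = p → 0 ≤ eval z p →
      0 ≤ eval z (pderiv i (rename Sum.inl f * rename Sum.inr g)) *
            eval z (pderiv j (rename Sum.inl f * rename Sum.inr g)) -
          eval z (pderiv i (pderiv j (rename Sum.inl f * rename Sum.inr g))) *
            eval z (rename Sum.inl f * rename Sum.inr g) := by
    intro p hp hev
    have := hp ▸ hev
    simpa [eval_sub, eval_mul] using this
  cases i with
  | inl i =>
    cases j with
    | inl j =>
      refine key _ (partSS f g i j) ?_
      rw [eval_mul]
      apply mul_nonneg (by rw [eval_pow]; positivity)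
      rw [eval_rename]
      have := hRf (z ∘ Sum.inl) (fun i => hz (Sum.inl i)) i j
      simp only [eval_sub, eval_mul]
      linarith [this]
    | inr j =>
      refine key _ (partST f g i j) (le_of_eq (by simp))
  | inr i =>
    cases j with
    | inl j =>
      refine key _ (partTS f g i j) (le_of_eq (by simp))
    | inr j =>
      refine key _ (partTT f g i j) ?_
      rw [eval_mul]
      apply mul_nonneg (by rw [eval_pow]; positivity)
      rw [eval_rename]
      have := hRg (z ∘ Sum.inr) (fun i => hz (Sum.inr i)) i j
      simp only [eval_sub, eval_mul]
      linarith [this]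
end
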